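/- For every integer n ≥ 1 and every partition ν = (ν₁ ≥ ν₂ ≥ … ≥ ν_ℓ ≥ 1) of n, every coefficient of the polynomial (Ω_{ν₂} ∘ Ω_{ν₃} ∘ ⋯ ∘ Ω_{ν_ℓ})(Δ^{ν₁−1}(p₁)) ∈ A, when expanded in monomials in p₁, p₂, …, is a polynomial in α with integer coefficients, i.e. lies in the subring ℤ[α] of R. -/

import Mathlib

/- R = ℚ[α], A = R[p₁,p₂,…].  For n ≥ 1 and a partition ν = (ν₁ ≥ ν₂ ≥ … ≥ ν_ℓ ≥ 1)
   of n (encoded as the weakly decreasing list ν₁ :: t of positive integers summing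
   to n), every coefficient of (Ω_{ν₂} ∘ ⋯ ∘ Ω_{ν_ℓ})(Δ^{ν₁−1}(p₁)), expanded in
   monomials in the pᵢ, lies in ℤ[α] ⊆ R: each of its ℚ-coefficients is an integer. -/

open MvPolynomial

noncomputable section

abbrev R : Type := Polynomial ℚ
abbrev A : Type := MvPolynomial ℕ+ R

/-- the variable α of R = ℚ[α] -/
def α : R := Polynomial.X

/-- the power-sum generator pᵢ (i ≥ 1) -/
def p (i : ℕ+) : A := X i

/-- the partial derivative ∂/∂pᵢ -/
def d (i : ℕ+) (f : A) : A := pderiv i f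

/-- the Laplace–Beltrami operator D_α -/
def Dal (f : A) : A :=
    (Polynomial.C (1/2 : ℚ) * (α - 1)) •
      (∑ᶠ i : ℕ+, (((i : ℕ) : R) * (((i : ℕ) : R) - 1)) • (p i * d i f))
  + (Polynomial.C (1/2 : ℚ) * α) •
      (∑ᶠ i : ℕ+, ∑ᶠ j : ℕ+, (((i : ℕ) : R) * ((j : ℕ) : R)) • (p (i + j) * d i (d j f)))
  + Polynomial.C (1/2 : ℚ) •
      (∑ᶠ i : ℕ+, ∑ᶠ j : ℕ+, (((i : ℕ) : R) + ((j : ℕ) : R)) • (p i * p j * d (i + j) f))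

/-- E₂ = Σ_{i≥1} i·p_{i+1}·∂ᵢ -/
def E₂ (f : A) : A := ∑ᶠ i : ℕ+, ((i : ℕ) : R) • (p (i + 1) * d i f)

/-- Δ = [D_α, E₂] -/
def Δop (f : A) : A := Dal (E₂ f) - E₂ (Dal f)

/-- Ω k is the operator Ω_{k+1}: Ω 0 = Ω₁ = E₂ and Ω (k+1) = Ω_{k+2} = [Δ, Ω_{k+1}];
    thus the operator Ω_v of the paper is `Ω (v - 1)`. -/
def Ω : ℕ → A → A
  | 0 => E₂
  | k + 1 => fun f => Δop (Ω k f) - Ω k (Δop f)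

/-!
Let `Aℤ = ℤ[α][p₁, p₂, …] ⊆ A`. The operator `E₂` and the first-order part
`(α - 1) Σ (i(i-1)/2) pᵢ∂ᵢ` of `D_α` visibly preserve `Aℤ`. In `(α/2) Σ ij p_{i+j}∂ᵢ∂ⱼ` and
`(1/2) Σ (i+j) pᵢpⱼ∂_{i+j}` the half is absorbed: the terms with `i ≠ j` come in equal pairs
`(i, j)`, `(j, i)`; the diagonal term `2i pᵢ²∂_{2i}` has an even coefficient; and `∂ᵢ²` has even
coefficients since `∂ᵢ² pᵢᵃ = a(a-1) pᵢ^(a-2)`. Hence `D_α`, and with it `Δ = [D_α, E₂]` and every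
`Ω_k`, maps `Aℤ` into itself, and `p₁ ∈ Aℤ`.
-/

namespace MvPolynomial

variable {σ R : Type*}

theorem pderiv_pderiv_comm [CommRing R] (i j : σ) (f : MvPolynomial σ R) :
    pderiv i (pderiv j f) = pderiv j (pderiv i f) := by
  classical
  have h : ⁅pderiv i, pderiv j⁆ = (0 : Derivation R (MvPolynomial σ R) (MvPolynomial σ R)) :=
    derivation_ext fun k => by
      rw [Derivation.commutator_apply, pderiv_X, pderiv_X, Pi.single_apply, Pi.single_apply]
      split_ifs <;> simp
  have := congr($h f)
  rwa [Derivation.commutator_apply, Derivation.zero_apply, sub_eq_zero] at this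

theorem two_dvd_pderiv_pderiv [CommSemiring R] (i : σ) (f : MvPolynomial σ R) :
    2 ∣ pderiv i (pderiv i f) := by
  classical
  induction f using MvPolynomial.induction_on' with
  | monomial s a =>
    obtain ⟨k, hk⟩ := (Nat.even_mul_pred_self (s i)).two_dvd
    refine ⟨monomial (s - Finsupp.single i 1 - Finsupp.single i 1) (a * k), ?_⟩
    rw [pderiv_monomial, pderiv_monomial, ← map_ofNat C, C_mul_monomial, Finsupp.tsub_apply,
      Finsupp.single_eq_same, mul_assoc, ← Nat.cast_mul, hk]
    push_cast
    ring_nf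
  | add f g hf hg => simpa only [map_add] using dvd_add hf hg

end MvPolynomial

theorem Finset.sum_sum_eq_two_nsmul_add_sum_diag {ι M : Type*} [LinearOrder ι] [AddCommMonoid M]
    (I : Finset ι) {u : ι → ι → M} (hu : ∀ i j, u i j = u j i) :
    ∑ i ∈ I, ∑ j ∈ I, u i j = 2 • ∑ i ∈ I, ∑ j ∈ I with i < j, u i j + ∑ i ∈ I, u i i := by
  have hrow : ∀ i ∈ I, ∑ j ∈ I, u i j
      = ∑ j ∈ I with i < j, u i j + ∑ j ∈ I with j < i, u i j + u i i := by
    intro i hi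
    rw [Finset.sum_filter, Finset.sum_filter, ← Finset.sum_ite_eq_of_mem I i (u i) hi,
      ← Finset.sum_add_distrib, ← Finset.sum_add_distrib]
    refine Finset.sum_congr rfl fun j _ => ?_
    rcases lt_trichotomy i j with h | rfl | h
    · simp [h, h.ne, not_lt_of_gt h]
    · simp
    · simp [h, h.ne', not_lt_of_gt h]
  have hlower : ∑ i ∈ I, ∑ j ∈ I with j < i, u i j = ∑ i ∈ I, ∑ j ∈ I with i < j, u i j := by
    rw [Finset.sum_comm' (t' := I) (s' := fun j => I.filter (j < ·))]
    · exact Finset.sum_congr rfl fun i _ => Finset.sum_congr rfl fun j _ => hu j i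
    · intro i j; simp only [Finset.mem_filter]; tauto
  rw [Finset.sum_congr rfl hrow, Finset.sum_add_distrib, Finset.sum_add_distrib, hlower, two_nsmul]

theorem finsum_finsum_eq_sum_sum {ι M : Type*} [AddCommMonoid M] {u : ι → ι → M} (I : Finset ι)
    (h : ∀ i j, u i j ≠ 0 → i ∈ I ∧ j ∈ I) :
    ∑ᶠ i, ∑ᶠ j, u i j = ∑ i ∈ I, ∑ j ∈ I, u i j := by
  have hrow : ∀ i, ∑ᶠ j, u i j = ∑ j ∈ I, u i j := fun i =>
    finsum_eq_sum_of_support_subset _ fun j hj => (h i j hj).2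
  rw [finsum_congr hrow]
  refine finsum_eq_sum_of_support_subset _ fun i hi => ?_
  by_contra hI
  exact hi (Finset.sum_eq_zero fun j _ => not_not.mp fun hne => hI (h i j hne).1)

theorem Set.MapsTo.foldr_comp {ι α : Type*} {F : ι → α → α} {s : Set α}
    (h : ∀ v, MapsTo (F v) s s) (t : List ι) : MapsTo (t.foldr (fun v g => F v ∘ g) id) s s := by
  induction t with
  | nil => exact mapsTo_id s
  | cons v t ih => exact (h v).comp ih

abbrev Rℤ : Subring R := (Polynomial.mapRingHom (Int.castRingHom ℚ)).range

abbrev Aℤ : Subring A := (MvPolynomial.map (Polynomial.mapRingHom (Int.castRingHom ℚ))).range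

lemma α_mem_Rℤ : α ∈ Rℤ := ⟨Polynomial.X, Polynomial.map_X _⟩

lemma p_mem_Aℤ (i : ℕ+) : p i ∈ Aℤ := ⟨X i, map_X _ _⟩

lemma smul_mem_Aℤ {c : R} {f : A} (hc : c ∈ Rℤ) (hf : f ∈ Aℤ) : c • f ∈ Aℤ := by
  obtain ⟨c, rfl⟩ := hc
  rw [smul_eq_C_mul, ← map_C]
  exact mul_mem ⟨_, rfl⟩ hf

lemma natCast_smul_mem_Aℤ (n : ℕ) {f : A} (hf : f ∈ Aℤ) : (n : R) • f ∈ Aℤ :=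
  smul_mem_Aℤ (natCast_mem _ n) hf

lemma finsum_mem_Aℤ {ι : Type*} {u : ι → A} (h : ∀ i, u i ∈ Aℤ) : ∑ᶠ i, u i ∈ Aℤ :=
  finsum_induction (· ∈ Aℤ) (zero_mem _) (fun _ _ => add_mem) h

lemma d_mem_Aℤ (i : ℕ+) {f : A} (hf : f ∈ Aℤ) : d i f ∈ Aℤ := by
  obtain ⟨g, rfl⟩ := hf
  exact ⟨pderiv i g, pderiv_map.symm⟩

lemma d_d_comm (i j : ℕ+) (f : A) : d i (d j f) = d j (d i f) := pderiv_pderiv_comm i j f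

lemma exists_finset_d_eq_zero (f : A) : ∃ I : Finset ℕ+, ∀ i ∉ I, ∀ k, i ≤ k → d k f = 0 :=
  ⟨Finset.Iic (f.vars.sup id), fun _ hi _ hik => pderiv_eq_zero_of_notMem_vars fun hk =>
    hi (Finset.mem_Iic.mpr (hik.trans (Finset.le_sup (f := id) hk)))⟩

lemma C_half_mul_two : Polynomial.C (1/2 : ℚ) * 2 = (1 : R) := by
  rw [← map_ofNat Polynomial.C 2, ← map_mul]; norm_num

lemma C_half_smul_two_nsmul (x : A) : Polynomial.C (1/2 : ℚ) • 2 • x = x := by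
  rw [← ofNat_smul_eq_nsmul R, smul_smul, C_half_mul_two, one_smul]

lemma C_half_mul_natCast_mul_sub_one (n : ℕ) :
    Polynomial.C (1/2 : ℚ) * ((n : R) * ((n : R) - 1)) = (n.choose 2 : ℕ) := by
  rw [← map_natCast Polynomial.C, ← map_natCast Polynomial.C, ← map_one Polynomial.C, ← map_sub,
    ← map_mul, ← map_mul, Nat.cast_choose_two]
  ring_nf

lemma half_smul_d_d_mem_Aℤ (i : ℕ+) {f : A} (hf : f ∈ Aℤ) :
    Polynomial.C (1/2 : ℚ) • d i (d i f) ∈ Aℤ := by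
  obtain ⟨g, rfl⟩ := hf
  obtain ⟨h, hh⟩ := two_dvd_pderiv_pderiv i g
  refine ⟨h, ?_⟩
  rw [d, d, pderiv_map, pderiv_map, hh, map_mul, map_ofNat, two_mul, ← two_nsmul,
    C_half_smul_two_nsmul]

lemma half_smul_sum_sum_mem_Aℤ {ι : Type*} [LinearOrder ι] (I : Finset ι) {u : ι → ι → A}
    (hu : ∀ i j, u i j = u j i) (hmem : ∀ i j, u i j ∈ Aℤ)
    (hdiag : ∀ i, Polynomial.C (1/2 : ℚ) • u i i ∈ Aℤ) :
    Polynomial.C (1/2 : ℚ) • ∑ i ∈ I, ∑ j ∈ I, u i j ∈ Aℤ := by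
  rw [Finset.sum_sum_eq_two_nsmul_add_sum_diag I hu, smul_add, C_half_smul_two_nsmul,
    Finset.smul_sum]
  exact add_mem (sum_mem fun i _ => sum_mem fun j _ => hmem i j) (sum_mem fun i _ => hdiag i)

section Dal

variable {f : A}

lemma first_order_term_mem_Aℤ (hf : f ∈ Aℤ) :
    (Polynomial.C (1/2 : ℚ) * (α - 1)) •
      (∑ᶠ i : ℕ+, (((i : ℕ) : R) * (((i : ℕ) : R) - 1)) • (p i * d i f)) ∈ Aℤ := by
  rw [smul_finsum]
  refine finsum_mem_Aℤ fun i => ?_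
  rw [smul_smul, mul_right_comm, C_half_mul_natCast_mul_sub_one]
  exact smul_mem_Aℤ (mul_mem (natCast_mem _ _) (sub_mem α_mem_Rℤ (one_mem _)))
    (mul_mem (p_mem_Aℤ i) (d_mem_Aℤ i hf))

lemma join_term_mem_Aℤ (hf : f ∈ Aℤ) :
    (Polynomial.C (1/2 : ℚ) * α) •
      (∑ᶠ i : ℕ+, ∑ᶠ j : ℕ+, (((i : ℕ) : R) * ((j : ℕ) : R)) • (p (i + j) * d i (d j f)))
      ∈ Aℤ := by
  obtain ⟨I, hI⟩ := exists_finset_d_eq_zero f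
  have hsupp : ∀ i j : ℕ+, (((i : ℕ) : R) * ((j : ℕ) : R)) • (p (i + j) * d i (d j f)) ≠ 0 →
      i ∈ I ∧ j ∈ I := by
    refine fun i j hij => ⟨not_not.mp fun hi => hij ?_, not_not.mp fun hj => hij ?_⟩
    · rw [d_d_comm, hI i hi i le_rfl, d, map_zero, mul_zero, smul_zero]
    · rw [hI j hj j le_rfl, d, map_zero, mul_zero, smul_zero]
  rw [finsum_finsum_eq_sum_sum I hsupp, mul_comm, mul_smul]
  refine smul_mem_Aℤ α_mem_Rℤ
    (half_smul_sum_sum_mem_Aℤ I (fun i j => ?_) (fun i j => ?_) fun i => ?_)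
  · rw [mul_comm, add_comm, d_d_comm]
  · exact smul_mem_Aℤ (mul_mem (natCast_mem _ _) (natCast_mem _ _))
      (mul_mem (p_mem_Aℤ _) (d_mem_Aℤ _ (d_mem_Aℤ _ hf)))
  · rw [smul_comm, ← mul_smul_comm]
    exact smul_mem_Aℤ (mul_mem (natCast_mem _ _) (natCast_mem _ _))
      (mul_mem (p_mem_Aℤ _) (half_smul_d_d_mem_Aℤ i hf))

lemma cut_term_mem_Aℤ (hf : f ∈ Aℤ) :
    Polynomial.C (1/2 : ℚ) •
      (∑ᶠ i : ℕ+, ∑ᶠ j : ℕ+, (((i : ℕ) : R) + ((j : ℕ) : R)) • (p i * p j * d (i + j) f))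
      ∈ Aℤ := by
  obtain ⟨I, hI⟩ := exists_finset_d_eq_zero f
  have hsupp : ∀ i j : ℕ+, (((i : ℕ) : R) + ((j : ℕ) : R)) • (p i * p j * d (i + j) f) ≠ 0 →
      i ∈ I ∧ j ∈ I := by
    refine fun i j hij => ⟨not_not.mp fun hi => hij ?_, not_not.mp fun hj => hij ?_⟩
    · rw [hI i hi (i + j) (PNat.lt_add_right i j).le, mul_zero, smul_zero]
    · rw [hI j hj (i + j) (PNat.lt_add_left j i).le, mul_zero, smul_zero]
  rw [finsum_finsum_eq_sum_sum I hsupp]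
  refine half_smul_sum_sum_mem_Aℤ I (fun i j => ?_) (fun i j => ?_) fun i => ?_
  · rw [add_comm, mul_comm (p i), add_comm j]
  · exact smul_mem_Aℤ (add_mem (natCast_mem _ _) (natCast_mem _ _))
      (mul_mem (mul_mem (p_mem_Aℤ _) (p_mem_Aℤ _)) (d_mem_Aℤ _ hf))
  · have hc : Polynomial.C (1/2 : ℚ) * ((i : ℕ) + (i : ℕ) : R) = (i : ℕ) := by
      linear_combination ((i : ℕ) : R) * C_half_mul_two
    rw [smul_smul, hc]
    exact natCast_smul_mem_Aℤ _ (mul_mem (mul_mem (p_mem_Aℤ _) (p_mem_Aℤ _)) (d_mem_Aℤ _ hf))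

end Dal

lemma mapsTo_Dal : Set.MapsTo Dal Aℤ Aℤ := fun _ hf =>
  add_mem (add_mem (first_order_term_mem_Aℤ hf) (join_term_mem_Aℤ hf)) (cut_term_mem_Aℤ hf)

lemma mapsTo_E₂ : Set.MapsTo E₂ Aℤ Aℤ := fun _ hf =>
  finsum_mem_Aℤ fun i => natCast_smul_mem_Aℤ _ (mul_mem (p_mem_Aℤ _) (d_mem_Aℤ i hf))

lemma mapsTo_Δop : Set.MapsTo Δop Aℤ Aℤ := fun _ hf =>
  sub_mem (mapsTo_Dal (mapsTo_E₂ hf)) (mapsTo_E₂ (mapsTo_Dal hf))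

lemma mapsTo_Ω (k : ℕ) : Set.MapsTo (Ω k) Aℤ Aℤ := by
  induction k with
  | zero => exact mapsTo_E₂
  | succ k ih => exact fun _ hf => sub_mem (mapsTo_Δop (ih hf)) (ih (mapsTo_Δop hf))

theorem coefficients_in_int_alpha_general
    (ν₁ : ℕ) (t : List ℕ) :
    ∀ (m : ℕ+ →₀ ℕ) (k : ℕ), ∃ z : ℤ,
      Polynomial.coeff
        (MvPolynomial.coeff m
          ((t.foldr (fun v g => (Ω (v - 1)) ∘ g) id) (Δop^[ν₁ - 1] (p 1)))) k
        = (z : ℚ) := by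
  intro m k
  obtain ⟨g, hg⟩ := Set.MapsTo.foldr_comp (fun v => mapsTo_Ω (v - 1)) t
    (mapsTo_Δop.iterate (ν₁ - 1) (p_mem_Aℤ 1))
  refine ⟨(g.coeff m).coeff k, ?_⟩
  rw [← hg, coeff_map, Polynomial.coe_mapRingHom, Polynomial.coeff_map, eq_intCast]

theorem coefficients_in_int_alpha
    (n : ℕ) (hn : 1 ≤ n) (ν₁ : ℕ) (t : List ℕ)
    (hsorted : List.Pairwise (· ≥ ·) (ν₁ :: t))
    (hpos : ∀ x ∈ ν₁ :: t, 0 < x)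
    (hsum : (ν₁ :: t).sum = n) :
    ∀ (m : ℕ+ →₀ ℕ) (k : ℕ), ∃ z : ℤ,
      Polynomial.coeff
        (MvPolynomial.coeff m
          ((t.foldr (fun v g => (Ω (v - 1)) ∘ g) id) (Δop^[ν₁ - 1] (p 1)))) k
        = (z : ℚ) :=
  coefficients_in_int_alpha_general ν₁ t
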